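/- arXiv:2509.13112 — 3 statements merged into one kernel-verified Lean document; each statement's English description precedes it below -/
import Mathlib

section
/- Let S ∈ ℝ^{n×n} be nonsingular, σ > 0, I' diagonal with ±1 entries, ε ∈ (0,1], and suppose σ ‖S^{-1}‖_∞ ≤ 1/(2/ε + 1). Let z* = S^{-1} b and let z̃* be the unique solution of (S + σI') z̃* = b. Then ‖z̃*‖_∞ ≤ (1 + ε/2) ‖z*‖_∞. -/
attribute [local instance] Matrix.linftyOpNormedRing

theorem stmt_10 (n : ℕ) (S : Matrix (Fin n) (Fin n) ℝ) (hS : S.det ≠ 0)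
    (σ : ℝ) (hσ : 0 < σ) (d : Fin n → ℝ) (hd : ∀ i, d i = 1 ∨ d i = -1)
    (ε : ℝ) (hε : 0 < ε) (hε1 : ε ≤ 1)
    (hσS : σ * ‖S⁻¹‖ ≤ 1 / (2 / ε + 1))
    (b z zt : Fin n → ℝ) (hz : z = S⁻¹.mulVec b)
    (hzt : (S + σ • Matrix.diagonal d).mulVec zt = b) :
    ‖zt‖ ≤ (1 + ε / 2) * ‖z‖ := by
  have hU : IsUnit S.det := isUnit_iff_ne_zero.mpr hS
  have key : zt = z - σ • (S⁻¹.mulVec ((Matrix.diagonal d).mulVec zt)) := by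
    have h1 := congrArg (S⁻¹.mulVec) hzt
    rw [Matrix.mulVec_mulVec, Matrix.mul_add, Matrix.nonsing_inv_mul S hU,
      Matrix.mul_smul, Matrix.add_mulVec, Matrix.one_mulVec,
      Matrix.smul_mulVec, ← Matrix.mulVec_mulVec] at h1
    rw [hz, ← h1]
    abel
  -- norm of diagonal mulVec
  have hDz : ‖(Matrix.diagonal d).mulVec zt‖ ≤ ‖zt‖ := by
    rw [pi_norm_le_iff_of_nonneg (norm_nonneg zt)]
    intro i
    have : (Matrix.diagonal d).mulVec zt i = d i * zt i := by
      simp [Matrix.mulVec_diagonal]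
    rw [this]
    calc ‖d i * zt i‖ = ‖zt i‖ := by
          rcases hd i with h | h <;> simp [h, norm_mul]
      _ ≤ ‖zt‖ := norm_le_pi_norm zt i
  have hbound : ‖zt‖ ≤ ‖z‖ + σ * ‖S⁻¹‖ * ‖zt‖ := by
    calc ‖zt‖ = ‖z - σ • (S⁻¹.mulVec ((Matrix.diagonal d).mulVec zt))‖ := by rw [← key]
      _ ≤ ‖z‖ + ‖σ • (S⁻¹.mulVec ((Matrix.diagonal d).mulVec zt))‖ := norm_sub_le _ _
      _ ≤ ‖z‖ + σ * ‖S⁻¹‖ * ‖zt‖ := by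
          rw [norm_smul, Real.norm_eq_abs, abs_of_pos hσ]
          have h2 : ‖S⁻¹.mulVec ((Matrix.diagonal d).mulVec zt)‖ ≤ ‖S⁻¹‖ * ‖zt‖ :=
            (Matrix.linfty_opNorm_mulVec _ _).trans
              (by exact mul_le_mul_of_nonneg_left hDz (norm_nonneg _))
          nlinarith [norm_nonneg (S⁻¹.mulVec ((Matrix.diagonal d).mulVec zt))]
  set α := σ * ‖S⁻¹‖ with hα
  have hα0 : 0 ≤ α := mul_nonneg hσ.le (norm_nonneg _)
  have hden : 0 < 2 / ε + 1 := by positivity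
  have hαle : α ≤ ε / (2 + ε) := by
    have heq : (1:ℝ) / (2 / ε + 1) = ε / (2 + ε) := by
      field_simp
    exact hσS.trans_eq heq
  have h3 : α * (2 + ε) ≤ ε := by
    rw [le_div_iff₀ (by linarith : (0:ℝ) < 2 + ε)] at hαle
    linarith
  have hα1 : α < 1 := lt_of_le_of_lt hαle (by rw [div_lt_one (by linarith)]; linarith)
  have hzn : 0 ≤ ‖z‖ := norm_nonneg z
  nlinarith [h3, hbound, norm_nonneg zt, mul_nonneg (norm_nonneg zt) (by linarith : (0:ℝ) ≤ ε - α * (2 + ε))]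
end

section
/- Let S ∈ ℝ^{n×n} be nonsingular, σ > 0, I' diagonal with ±1 entries, ε ∈ (0,1], and suppose σ ‖S^{-1}‖_∞ ≤ 1/(2/ε + 1). Let z* = S^{-1} b and z̃* = (S + σI')^{-1} b. Then ‖z̃* − z*‖_∞ ≤ (ε/2) ‖z*‖_∞. -/
/-!
Write `z = S⁻¹ b`, `z̃ = (S + E)⁻¹ b` with `E = σ I'`, and `c = ‖S⁻¹‖ ‖E‖ ≤ σ ‖S⁻¹‖`.
Subtracting `S z = b` from `(S + E) z̃ = b` gives `z̃ - z = -S⁻¹ E z̃`, hence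
`‖z̃ - z‖ ≤ c ‖z̃‖ ≤ c (‖z‖ + ‖z̃ - z‖)`, i.e. `‖z̃ - z‖ ≤ c / (1 - c) ‖z‖`.
The hypothesis on `σ ‖S⁻¹‖` is exactly what makes `c / (1 - c) ≤ ε / 2`.
-/

attribute [local instance] Matrix.linftyOpNormedRing Matrix.linftyOpNormedSpace

lemma norm_sub_le_div_one_sub_mul_norm {E : Type*} [SeminormedAddGroup E] {x y : E} {c : ℝ}
    (hc₀ : 0 ≤ c) (hc₁ : c < 1) (h : ‖y - x‖ ≤ c * ‖y‖) :
    ‖y - x‖ ≤ c / (1 - c) * ‖x‖ := by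
  have hy : ‖y‖ ≤ ‖x‖ + ‖y - x‖ := norm_le_insert' y x
  rw [div_mul_eq_mul_div, le_div_iff₀ (sub_pos.mpr hc₁)]
  nlinarith

lemma div_one_sub_le_half {c ε : ℝ} (hε : 0 < ε) (hc : c ≤ 1 / (2 / ε + 1)) :
    c / (1 - c) ≤ ε / 2 := by
  have hc' : c * (2 + ε) ≤ ε := by
    rwa [show 1 / (2 / ε + 1) = ε / (2 + ε) by field_simp, le_div_iff₀ (by positivity)] at hc
  rw [div_le_div_iff₀ (by nlinarith) two_pos]
  linarith

namespace Matrix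

theorem inv_add_mulVec_sub_inv_mulVec {m R : Type*} [Fintype m] [DecidableEq m] [CommRing R]
    {S E : Matrix m m R} (hS : IsUnit S) (hSE : IsUnit (S + E)) (b : m → R) :
    (S + E)⁻¹ *ᵥ b - S⁻¹ *ᵥ b = -(S⁻¹ *ᵥ (E *ᵥ ((S + E)⁻¹ *ᵥ b))) := by
  rw [← neg_sub, ← sub_mulVec, inv_sub_inv (iff_of_true hS hSE), add_sub_cancel_left,
    mulVec_mulVec, mulVec_mulVec]

variable {m 𝕜 : Type*} [Fintype m] [DecidableEq m] [NormedField 𝕜] [CompleteSpace 𝕜]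
  {S E : Matrix m m 𝕜}

theorem isUnit_add_of_norm_inv_mul_norm_lt_one (hS : IsUnit S) (h : ‖S⁻¹‖ * ‖E‖ < 1) :
    IsUnit (S + E) := by
  -- instance search does not see the completeness of `Matrix m m 𝕜` through the `L∞` norm
  have : HasSummableGeomSeries (Matrix m m 𝕜) :=
    @instHasSummableGeomSeriesOfCompleteSpace _ _ (inferInstanceAs (CompleteSpace (m → m → 𝕜)))
  have hT : ‖-(S⁻¹ * E)‖ < 1 := by
    rw [norm_neg]
    exact (norm_mul_le _ _).trans_lt h
  have hfactor : S + E = S * (1 - -(S⁻¹ * E)) := by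
    rw [sub_neg_eq_add, mul_add, mul_one, ← Matrix.mul_assoc, mul_nonsing_inv _
      ((isUnit_iff_isUnit_det S).mp hS), Matrix.one_mul]
  rw [hfactor]
  exact hS.mul (isUnit_one_sub_of_norm_lt_one hT)

theorem norm_inv_add_mulVec_sub_inv_mulVec_le (hS : IsUnit S) (h : ‖S⁻¹‖ * ‖E‖ < 1)
    (b : m → 𝕜) :
    ‖(S + E)⁻¹ *ᵥ b - S⁻¹ *ᵥ b‖ ≤
      ‖S⁻¹‖ * ‖E‖ / (1 - ‖S⁻¹‖ * ‖E‖) * ‖S⁻¹ *ᵥ b‖ := by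
  refine norm_sub_le_div_one_sub_mul_norm (by positivity) h ?_
  rw [inv_add_mulVec_sub_inv_mulVec hS (isUnit_add_of_norm_inv_mul_norm_lt_one hS h), norm_neg,
    mul_assoc]
  exact (linfty_opNorm_mulVec _ _).trans
    (mul_le_mul_of_nonneg_left (linfty_opNorm_mulVec _ _) (norm_nonneg _))

end Matrix

theorem stmt_11_general (n : ℕ) (S : Matrix (Fin n) (Fin n) ℝ) (hS : S.det ≠ 0)
    (σ : ℝ) (hσ : 0 < σ) (d : Fin n → ℝ) (hd : ∀ i, d i = 1 ∨ d i = -1)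
    (ε : ℝ) (hε : 0 < ε)
    (hσS : σ * ‖S⁻¹‖ ≤ 1 / (2 / ε + 1))
    (b : Fin n → ℝ) :
    ‖(S + σ • Matrix.diagonal d)⁻¹.mulVec b - S⁻¹.mulVec b‖ ≤
      (ε / 2) * ‖S⁻¹.mulVec b‖ := by
  have hD : ‖Matrix.diagonal d‖ ≤ 1 := by
    rw [Matrix.linfty_opNorm_diagonal, pi_norm_le_iff_of_nonneg zero_le_one]
    intro i
    rcases hd i with h | h <;> simp [h]
  have hE : ‖σ • Matrix.diagonal d‖ ≤ σ := by
    rw [norm_smul, Real.norm_of_nonneg hσ.le]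
    exact mul_le_of_le_one_right hσ.le hD
  have hc : ‖S⁻¹‖ * ‖σ • Matrix.diagonal d‖ ≤ 1 / (2 / ε + 1) :=
    (mul_le_mul_of_nonneg_left hE (norm_nonneg _)).trans (mul_comm σ _ ▸ hσS)
  have hc₁ : 1 / (2 / ε + 1) < 1 := by
    rw [div_lt_one (by positivity)]
    linarith [div_pos two_pos hε]
  refine (Matrix.norm_inv_add_mulVec_sub_inv_mulVec_le
    ((Matrix.isUnit_iff_isUnit_det S).mpr hS.isUnit) (hc.trans_lt hc₁) b).trans ?_
  exact mul_le_mul_of_nonneg_right (div_one_sub_le_half hε hc) (norm_nonneg _)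

theorem stmt_11 (n : ℕ) (S : Matrix (Fin n) (Fin n) ℝ) (hS : S.det ≠ 0)
    (σ : ℝ) (hσ : 0 < σ) (d : Fin n → ℝ) (hd : ∀ i, d i = 1 ∨ d i = -1)
    (ε : ℝ) (hε : 0 < ε) (hε1 : ε ≤ 1)
    (hσS : σ * ‖S⁻¹‖ ≤ 1 / (2 / ε + 1))
    (b : Fin n → ℝ) :
    ‖(S + σ • Matrix.diagonal d)⁻¹.mulVec b - S⁻¹.mulVec b‖ ≤
      (ε / 2) * ‖S⁻¹.mulVec b‖ :=
  stmt_11_general n S hS σ hσ d hd ε hε hσS b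
end

section
/- Let G be a connected undirected unweighted graph with m edges and spectral gap γ_G > 0. Then for any two vertices u, v, the commute time satisfies κ_G(u,v) = T_G(u,v) + T_G(v,u) ≤ (2m/γ_G)(1/d(u) + 1/d(v)), and in particular the hitting time T_G(u,v) ≤ (2m/γ_G)(1/d(u) + 1/d(v)). -/
/-!
With `L = D - A` and `h = T(·, v) - T(·, u)`, the first-step equations and `∑ₓ (L h) x = 0` give
`L h = 2m (e_u - e_v)`, so `⟨h, L h⟩ = 2m (T(u, v) + T(v, u))`. Shift `h` by its degree-weighted
mean so that `y = D^{1/2} h` is orthogonal to the kernel vector `D^{1/2} 1` of the normalized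
Laplacian `N`. Then `γ ‖y‖² ≤ ⟨y, N y⟩`, and by AM-GM this forces
`⟨y, N y⟩ ≤ ‖N y‖² / γ = ‖D^{-1/2} L h‖² / γ = (2m)² (1/d(u) + 1/d(v)) / γ`.
Hitting times are nonnegative by the minimum principle, which gives the bound on `T(u, v)`.
-/

open Finset Matrix

lemma Finset.sum_mul_le_sum_sq_div {ι : Type*} (s : Finset ι) {γ : ℝ} (hγ : 0 < γ)
    {y z : ι → ℝ} (h : γ * ∑ i ∈ s, y i ^ 2 ≤ ∑ i ∈ s, y i * z i) :
    ∑ i ∈ s, y i * z i ≤ (∑ i ∈ s, z i ^ 2) / γ := by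
  -- AM-GM: `2 γ y z ≤ γ² y² + z²`
  have amgm : ∑ i ∈ s, 2 * γ * (y i * z i) ≤ ∑ i ∈ s, (γ ^ 2 * y i ^ 2 + z i ^ 2) :=
    sum_le_sum fun i _ => by nlinarith [sq_nonneg (γ * y i - z i)]
  rw [← mul_sum, sum_add_distrib, ← mul_sum] at amgm
  rw [le_div_iff₀ hγ]
  nlinarith

namespace SimpleGraph

variable {V : Type*} [Fintype V] [DecidableEq V] (G : SimpleGraph V) [DecidableRel G.Adj]

lemma sum_lapMatrix_mulVec (f : V → ℝ) : ∑ x, (G.lapMatrix ℝ *ᵥ f) x = 0 := by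
  rw [← one_dotProduct, dotProduct_mulVec, ← mulVec_transpose, (G.isSymm_lapMatrix (R := ℝ)).eq]
  exact (congrArg (· ⬝ᵥ f) G.lapMatrix_mulVec_const_eq_zero).trans (zero_dotProduct f)

lemma lapMatrix_mulVec_sub_const (f : V → ℝ) (c : ℝ) :
    G.lapMatrix ℝ *ᵥ (fun x => f x - c) = G.lapMatrix ℝ *ᵥ f := by
  have : (fun x => f x - c) = f - c • fun _ => 1 := by ext; simp
  rw [this, mulVec_sub, mulVec_smul, lapMatrix_mulVec_const_eq_zero, smul_zero, sub_zero]

/-- `D^{-1/2} (D - A) D^{-1/2}`, provided no vertex is isolated. -/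
noncomputable def normLapMatrix : Matrix V V ℝ := of fun u v =>
  if u = v then 1 else
    if G.Adj u v then -1 / Real.sqrt ((G.degree u : ℝ) * (G.degree v : ℝ)) else 0

lemma normLapMatrix_mulVec_sqrt_degree_mul (hdeg : ∀ v, 0 < G.degree v) (f : V → ℝ) (x : V) :
    (G.normLapMatrix *ᵥ fun w => √(G.degree w : ℝ) * f w) x =
      (G.lapMatrix ℝ *ᵥ f) x / √(G.degree x : ℝ) := by
  have hx : 0 < √(G.degree x : ℝ) := Real.sqrt_pos.2 (Nat.cast_pos.2 (hdeg x))
  calc (G.normLapMatrix *ᵥ fun w => √(G.degree w : ℝ) * f w) x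
      = ∑ w, ((if x = w then √(G.degree x : ℝ) * f x else 0) +
          if G.Adj x w then -f w / √(G.degree x : ℝ) else 0) := by
        simp only [mulVec, dotProduct]
        refine sum_congr rfl fun w _ => ?_
        rcases eq_or_ne x w with rfl | hxw
        · simp [normLapMatrix]
        by_cases hadj : G.Adj x w
        · simp only [normLapMatrix, of_apply, if_neg hxw, if_pos hadj, zero_add,
            Real.sqrt_mul (Nat.cast_nonneg _)]
          have hw : 0 < √(G.degree w : ℝ) := Real.sqrt_pos.2 (Nat.cast_pos.2 (hdeg w))
          field_simp
        · simp [normLapMatrix, hxw, hadj]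
    _ = √(G.degree x : ℝ) * f x - (∑ w ∈ G.neighborFinset x, f w) / √(G.degree x : ℝ) := by
        rw [sum_add_distrib, sum_ite_eq, if_pos (mem_univ x), ← sum_filter,
          ← neighborFinset_eq_filter, sum_div]
        simp only [neg_div, sum_neg_distrib, sub_eq_add_neg]
    _ = (G.lapMatrix ℝ *ᵥ f) x / √(G.degree x : ℝ) := by
        rw [lapMatrix_mulVec_apply]
        field_simp
        rw [Real.sq_sqrt (Nat.cast_nonneg _), mul_comm]

/-- `γ ≤ λ₂` for the normalized Laplacian, whose kernel is spanned by `D^{1/2} 1`. -/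
def HasNormLapGap (γ : ℝ) : Prop :=
  ∀ x : V → ℝ, ∑ u, √(G.degree u : ℝ) * x u = 0 →
    γ * ∑ u, x u ^ 2 ≤ ∑ u, ∑ v, x u * G.normLapMatrix u v * x v

lemma sum_mul_lapMatrix_mulVec_le (hdeg : ∀ v, 0 < G.degree v) {γ : ℝ} (hγ : 0 < γ)
    (hgap : G.HasNormLapGap γ) (f : V → ℝ) :
    ∑ x, f x * (G.lapMatrix ℝ *ᵥ f) x ≤
      (∑ x, (G.lapMatrix ℝ *ᵥ f) x ^ 2 / G.degree x) / γ := by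
  obtain hV | hV := isEmpty_or_nonempty V
  · simp
  set d : V → ℝ := fun x => G.degree x
  set Lf := G.lapMatrix ℝ *ᵥ f
  have hd : ∀ x, 0 < d x := fun x => Nat.cast_pos.2 (hdeg x)
  have hs : ∀ x, 0 < √(d x) := fun x => Real.sqrt_pos.2 (hd x)
  -- Shifting `f` by its `d`-weighted mean makes `D^{1/2} (f - c)` orthogonal to `D^{1/2} 1`.
  set c := (∑ x, d x * f x) / ∑ x, d x
  set y : V → ℝ := fun x => √(d x) * (f x - c)
  set z : V → ℝ := fun x => Lf x / √(d x)
  have horth : ∑ x, √(d x) * y x = 0 := by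
    have : ∑ x, d x ≠ 0 := (sum_pos (fun x _ => hd x) univ_nonempty).ne'
    simp only [y, ← mul_assoc, Real.mul_self_sqrt (hd _).le, mul_sub, sum_sub_distrib, ← sum_mul, c]
    field_simp
    ring
  have hquad : ∑ u, ∑ v, y u * G.normLapMatrix u v * y v = ∑ x, y x * z x := by
    have hNy : G.normLapMatrix *ᵥ y = z := funext fun x => by
      rw [G.normLapMatrix_mulVec_sqrt_degree_mul hdeg, lapMatrix_mulVec_sub_const]
    simp only [← hNy, mulVec, dotProduct, mul_sum, mul_assoc]
  have hyz : ∑ x, y x * z x = ∑ x, f x * Lf x := by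
    calc ∑ x, y x * z x = ∑ x, (f x - c) * Lf x :=
          sum_congr rfl fun x _ => by
            change √(d x) * (f x - c) * (Lf x / √(d x)) = _
            field_simp [(hs x).ne']
      _ = ∑ x, f x * Lf x - c * ∑ x, Lf x := by simp only [sub_mul, sum_sub_distrib, mul_sum]
      _ = ∑ x, f x * Lf x := by rw [sum_lapMatrix_mulVec, mul_zero, sub_zero]
  have hzz : ∑ x, z x ^ 2 = ∑ x, Lf x ^ 2 / d x :=
    sum_congr rfl fun x _ => by rw [div_pow, Real.sq_sqrt (hd x).le]
  rw [← hyz, ← hzz]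
  exact sum_mul_le_sum_sq_div univ hγ (hquad ▸ hgap y horth)

structure IsHittingTime (T : V → V → ℝ) : Prop where
  self : ∀ v, T v v = 0
  step : ∀ u v, u ≠ v → T u v = 1 + (∑ w ∈ G.neighborFinset u, T w v) / G.degree u

variable {G} {T : V → V → ℝ}

lemma IsHittingTime.nonneg (hT : G.IsHittingTime T) (hdeg : ∀ v, 0 < G.degree v) (a b : V) :
    0 ≤ T a b := by
  obtain ⟨a₀, -, hmin⟩ := exists_min_image univ (T · b) ⟨b, mem_univ b⟩
  suffices a₀ = b from hT.self b ▸ this ▸ hmin a (mem_univ a)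
  -- Minimum principle: at a minimiser `a₀ ≠ b` the first-step equation reads `T ≥ 1 + T`.
  by_contra h
  have hd : (0 : ℝ) < G.degree a₀ := Nat.cast_pos.2 (hdeg a₀)
  have hle : G.degree a₀ * T a₀ b ≤ ∑ w ∈ G.neighborFinset a₀, T w b := by
    have := card_nsmul_le_sum (G.neighborFinset a₀) (T · b) _ fun w _ => hmin w (mem_univ w)
    rwa [card_neighborFinset_eq_degree, nsmul_eq_mul] at this
  linarith [(le_div_iff₀' hd).2 hle, hT.step a₀ b h]

lemma IsHittingTime.lapMatrix_mulVec_of_ne (hT : G.IsHittingTime T) {u v : V} (h : u ≠ v) :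
    (G.lapMatrix ℝ *ᵥ fun w => T w v) u = G.degree u := by
  have hS : (G.degree u : ℝ) = 0 → ∑ w ∈ G.neighborFinset u, T w v = 0 := fun hu => by
    rw [card_eq_zero.1 (by simpa using hu : #(G.neighborFinset u) = 0), sum_empty]
  rw [lapMatrix_mulVec_apply, hT.step u v h, mul_add, mul_one, mul_div_cancel_of_imp' hS,
    add_sub_cancel_right]

lemma IsHittingTime.lapMatrix_mulVec_self (hT : G.IsHittingTime T) (v : V) :
    (G.lapMatrix ℝ *ᵥ fun w => T w v) v = G.degree v - 2 * #G.edgeFinset := by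
  have hsum := G.sum_lapMatrix_mulVec fun w => T w v
  rw [← add_sum_erase _ _ (mem_univ v),
    sum_congr rfl fun x hx => hT.lapMatrix_mulVec_of_ne (ne_of_mem_erase hx)] at hsum
  have hdeg : ∑ x, (G.degree x : ℝ) = 2 * #G.edgeFinset := by
    exact_mod_cast G.sum_degrees_eq_twice_card_edges
  rw [← add_sum_erase _ _ (mem_univ v)] at hdeg
  linarith

lemma IsHittingTime.lapMatrix_mulVec_sub (hT : G.IsHittingTime T) {u v : V} (huv : u ≠ v)
    (x : V) : (G.lapMatrix ℝ *ᵥ fun w => T w v - T w u) x =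
      2 * #G.edgeFinset * ((if x = u then 1 else 0) - if x = v then 1 else 0) := by
  rw [show (fun w => T w v - T w u) = (fun w => T w v) - fun w => T w u from rfl, mulVec_sub,
    Pi.sub_apply]
  rcases eq_or_ne x u with rfl | hxu
  · simp [hT.lapMatrix_mulVec_of_ne huv, hT.lapMatrix_mulVec_self, huv]
  rcases eq_or_ne x v with rfl | hxv
  · simp [hT.lapMatrix_mulVec_of_ne huv.symm, hT.lapMatrix_mulVec_self, hxu]
  · simp [hT.lapMatrix_mulVec_of_ne hxu, hT.lapMatrix_mulVec_of_ne hxv, hxu, hxv]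

lemma IsHittingTime.commuteTime_le (hT : G.IsHittingTime T) (hdeg : ∀ v, 0 < G.degree v)
    {γ : ℝ} (hγ : 0 < γ) (hgap : G.HasNormLapGap γ) {u v : V} (huv : u ≠ v) :
    T u v + T v u ≤ 2 * #G.edgeFinset / γ * (1 / G.degree u + 1 / G.degree v) := by
  set m : ℝ := (#G.edgeFinset : ℝ)
  set L := G.lapMatrix ℝ *ᵥ fun w => T w v - T w u
  have hL : ∀ x, L x = 2 * m * ((if x = u then 1 else 0) - if x = v then 1 else 0) :=
    hT.lapMatrix_mulVec_sub huv
  have hdir : ∑ x, (T x v - T x u) * L x = 2 * m * (T u v + T v u) := by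
    rw [Fintype.sum_eq_add u v huv (by simp_all)]
    simp only [hL, hT.self, sub_zero, zero_sub, huv, huv.symm, mul_one,
      mul_neg, neg_mul, neg_neg, ↓reduceIte]
    ring
  have hnorm : ∑ x, L x ^ 2 / G.degree x = (2 * m) ^ 2 * (1 / G.degree u + 1 / G.degree v) := by
    rw [Fintype.sum_eq_add u v huv (by simp_all)]
    simp only [hL, huv, huv.symm, sub_zero, zero_sub, mul_one, mul_neg, even_two, Even.neg_pow,
      ↓reduceIte]
    ring
  have key := G.sum_mul_lapMatrix_mulVec_le hdeg hγ hgap fun w => T w v - T w u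
  rw [hdir, hnorm] at key
  have hm : 0 < m := by
    obtain ⟨w, hw⟩ := G.degree_pos_iff_exists_adj u |>.1 (hdeg u)
    exact Nat.cast_pos.2 (card_pos.2 ⟨s(u, w), mem_edgeFinset.2 hw⟩)
  refine le_of_mul_le_mul_left ?_ (by positivity : 0 < 2 * m)
  calc 2 * m * (T u v + T v u) ≤ (2 * m) ^ 2 * (1 / G.degree u + 1 / G.degree v) / γ := key
    _ = 2 * m * (2 * m / γ * (1 / G.degree u + 1 / G.degree v)) := by ring

end SimpleGraph

theorem stmt_13_general (V : Type*) [Fintype V] [DecidableEq V]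
    (G : SimpleGraph V) [DecidableRel G.Adj]
    (hdeg : ∀ v, 0 < G.degree v)
    (γ : ℝ) (hγ : 0 < γ)
    (Lnorm : Matrix V V ℝ)
    (hL : ∀ u v, Lnorm u v = if u = v then 1 else
      if G.Adj u v then -1 / Real.sqrt ((G.degree u : ℝ) * (G.degree v : ℝ)) else 0)
    (hspec_low : ∀ x : V → ℝ, (∑ u, Real.sqrt (G.degree u : ℝ) * x u = 0) →
      γ * ∑ u, (x u) ^ 2 ≤ ∑ u, ∑ v, x u * Lnorm u v * x v)
    (T : V → V → ℝ)
    (hT0 : ∀ v, T v v = 0)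
    (hTrec : ∀ u v, u ≠ v →
      T u v = 1 + (∑ w ∈ G.neighborFinset u, T w v) / (G.degree u : ℝ)) :
    ∀ u v, T u v + T v u ≤
        (2 * (G.edgeFinset.card : ℝ) / γ) * (1 / (G.degree u : ℝ) + 1 / (G.degree v : ℝ)) ∧
      T u v ≤
        (2 * (G.edgeFinset.card : ℝ) / γ) * (1 / (G.degree u : ℝ) + 1 / (G.degree v : ℝ)) := by
  have hT : G.IsHittingTime T := ⟨hT0, hTrec⟩
  obtain rfl : Lnorm = G.normLapMatrix := Matrix.ext hL
  intro u v
  have hcommute : T u v + T v u ≤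
      (2 * (G.edgeFinset.card : ℝ) / γ) * (1 / (G.degree u : ℝ) + 1 / (G.degree v : ℝ)) := by
    rcases eq_or_ne u v with rfl | huv
    · rw [hT.self, add_zero]
      positivity
    · exact hT.commuteTime_le hdeg hγ hspec_low huv
  exact ⟨hcommute, by linarith [hT.nonneg hdeg v u]⟩

theorem stmt_13 (V : Type*) [Fintype V] [DecidableEq V]
    (G : SimpleGraph V) [DecidableRel G.Adj] (hconn : G.Connected)
    (hdeg : ∀ v, 0 < G.degree v)
    (γ : ℝ) (hγ : 0 < γ)
    (Lnorm : Matrix V V ℝ)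
    (hL : ∀ u v, Lnorm u v = if u = v then 1 else
      if G.Adj u v then -1 / Real.sqrt ((G.degree u : ℝ) * (G.degree v : ℝ)) else 0)
    (hspec_low : ∀ x : V → ℝ, (∑ u, Real.sqrt (G.degree u : ℝ) * x u = 0) →
      γ * ∑ u, (x u) ^ 2 ≤ ∑ u, ∑ v, x u * Lnorm u v * x v)
    (hspec_high : ∀ x : V → ℝ,
      ∑ u, ∑ v, x u * Lnorm u v * x v ≤ (2 - γ) * ∑ u, (x u) ^ 2)
    (T : V → V → ℝ)
    (hT0 : ∀ v, T v v = 0)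
    (hTrec : ∀ u v, u ≠ v →
      T u v = 1 + (∑ w ∈ G.neighborFinset u, T w v) / (G.degree u : ℝ)) :
    ∀ u v, T u v + T v u ≤
        (2 * (G.edgeFinset.card : ℝ) / γ) * (1 / (G.degree u : ℝ) + 1 / (G.degree v : ℝ)) ∧
      T u v ≤
        (2 * (G.edgeFinset.card : ℝ) / γ) * (1 / (G.degree u : ℝ) + 1 / (G.degree v : ℝ)) :=
  stmt_13_general V G hdeg γ hγ Lnorm hL hspec_low T hT0 hTrec
end
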